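/- For N = 2^n with n odd, the number of integers i with 0 < i < N such that S(i,N) = m(N) is 2^((n-1)/2). -/
import Mathlib


/-- Number of dimension-`k` links crossing intercolumn position `i`
(least nonnegative residue mod `2^k`). -/
def f (i : ℤ) (k : ℕ) : ℤ := (i * (1 - 2 * (((i - 1) / 2 ^ (k - 1)) % 2))) % 2 ^ k

/-- Total wire density at intercolumn position `i` for `N = 2^n`. -/
def S (i : ℤ) (n : ℕ) : ℤ := ∑ k ∈ Finset.Icc 1 n, f i k

/-- The `j`-th binary digit of `i`, counting from 1 at the right. -/
def b (i : ℤ) (j : ℕ) : ℤ := (i / 2 ^ (j - 1)) % 2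

/-- Excess of 1's over 0's among bit positions `j+1, ..., n` of `i`. -/
def e (i : ℤ) (j n : ℕ) : ℤ := ∑ l ∈ Finset.Icc (j + 1) n, (2 * b i l - 1)

/-- Maximum wire density `m(N)` for `N = 2^n`. -/
def m (n : ℕ) : ℤ := (4 * 2 ^ n - (-1) ^ n - 3) / 6

/-- Leftmost maximizing position `p(N)` for `N = 2^n`. -/
def p (n : ℕ) : ℤ := (2 ^ n - (-1) ^ n) / 3

lemma f_min (i : ℤ) (k : ℕ) (hk : 1 ≤ k) :
    f i k = min (i % 2 ^ k) (2 ^ k - i % 2 ^ k) := by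
  obtain ⟨k, rfl⟩ : ∃ k', k = k' + 1 := ⟨k - 1, by omega⟩
  set M : ℤ := 2 ^ k with hMdef
  have hM0 : 0 < M := by positivity
  have h2 : (2 : ℤ) ^ (k + 1) = 2 * M := by rw [pow_succ]; ring
  have hk1 : (k + 1) - 1 = k := by omega
  unfold f
  rw [hk1, h2, ← hMdef]
  set r := i % (2 * M) with hrdef
  have hr0 : 0 ≤ r := Int.emod_nonneg _ (by positivity)
  have hr2 : r < 2 * M := Int.emod_lt_of_pos _ (by positivity)
  have hi : i = 2 * M * (i / (2 * M)) + r := (Int.mul_ediv_add_emod i (2 * M)).symm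
  set q := i / (2 * M) with hqdef
  rcases eq_or_lt_of_le hr0 with h0 | hpos
  · -- r = 0
    have hbit : (i - 1) / M % 2 = 1 := by
      have e1 : i - 1 = (M - 1) + M * (2 * q - 1) := by rw [hi, ← h0]; ring
      rw [e1, Int.add_mul_ediv_left _ _ (ne_of_gt hM0),
        Int.ediv_eq_zero_of_lt (by omega) (by omega)]
      have e2 : (0 : ℤ) + (2 * q - 1) = -1 + 2 * q := by ring
      rw [e2, Int.add_mul_emod_self_left]
      decide
    rw [hbit]
    have e3 : i * (1 - 2 * 1) = 0 + 2 * M * (-q) := by rw [hi, ← h0]; ring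
    rw [e3, Int.add_mul_emod_self_left, Int.zero_emod]
    rw [min_def]; split <;> omega
  · rcases le_or_gt r M with hle | hgt
    · -- 1 ≤ r ≤ M
      have hbit : (i - 1) / M % 2 = 0 := by
        have e1 : i - 1 = (r - 1) + M * (2 * q) := by rw [hi]; ring
        rw [e1, Int.add_mul_ediv_left _ _ (ne_of_gt hM0),
          Int.ediv_eq_zero_of_lt (by omega) (by omega)]
        have e2 : (0 : ℤ) + 2 * q = 0 + 2 * q := rfl
        rw [Int.add_mul_emod_self_left]
        decide
      rw [hbit]
      have e3 : i * (1 - 2 * 0) = r + 2 * M * q := by rw [hi]; ring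
      rw [e3, Int.add_mul_emod_self_left, Int.emod_eq_of_lt hr0 hr2]
      rw [min_def]; split <;> omega
    · -- M < r < 2M
      have hbit : (i - 1) / M % 2 = 1 := by
        have e1 : i - 1 = (r - 1 - M) + M * (2 * q + 1) := by rw [hi]; ring
        rw [e1, Int.add_mul_ediv_left _ _ (ne_of_gt hM0),
          Int.ediv_eq_zero_of_lt (by omega) (by omega)]
        have e2 : (0 : ℤ) + (2 * q + 1) = 1 + 2 * q := by ring
        rw [e2, Int.add_mul_emod_self_left]
        decide
      rw [hbit]
      have e3 : i * (1 - 2 * 1) = (2 * M - r) + 2 * M * (-q - 1) := by rw [hi]; ring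
      rw [e3, Int.add_mul_emod_self_left, Int.emod_eq_of_lt (by omega) (by omega)]
      rw [min_def]; split <;> omega

lemma f_period (i c : ℤ) (k : ℕ) (hk : 1 ≤ k) : f (i + 2 ^ k * c) k = f i k := by
  rw [f_min _ _ hk, f_min _ _ hk, Int.add_mul_emod_self_left]

lemma S_zero (n : ℕ) : S 0 n = 0 := by
  unfold S
  refine Finset.sum_eq_zero fun k _ => ?_
  simp [f]

lemma S_split (i : ℤ) (t : ℕ) :
    S i (2 * t + 3) = S i (2 * t + 1) + f i (2 * t + 2) + f i (2 * t + 3) := by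
  unfold S
  rw [show 2 * t + 3 = (2 * t + 2) + 1 by ring, Finset.sum_Icc_succ_top (by omega),
    show 2 * t + 2 = (2 * t + 1) + 1 by ring, Finset.sum_Icc_succ_top (by omega)]

lemma S_low (t : ℕ) (a r : ℤ) : S (a * 2 ^ (2 * t + 1) + r) (2 * t + 1) = S r (2 * t + 1) := by
  unfold S
  refine Finset.sum_congr rfl fun k hk => ?_
  simp only [Finset.mem_Icc] at hk
  have h : a * 2 ^ (2 * t + 1) + r = r + 2 ^ k * (a * 2 ^ (2 * t + 1 - k)) := by
    have h2 : (2 : ℤ) ^ k * 2 ^ (2 * t + 1 - k) = 2 ^ (2 * t + 1) := by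
      rw [← pow_add]; congr 1; omega
    rw [← h2]; ring
  rw [h, f_period _ _ _ hk.1]

lemma S_rec (t : ℕ) (a r : ℤ) (ha : 0 ≤ a) (ha4 : a < 4) (hr0 : 0 ≤ r)
    (hrM : r < 2 ^ (2 * t + 1)) :
    S (a * 2 ^ (2 * t + 1) + r) (2 * t + 3) =
      S r (2 * t + 1) +
        (if a = 0 then 2 * r else if a = 3 then 2 * (2 ^ (2 * t + 1) - r)
          else 2 * 2 ^ (2 * t + 1)) := by
  have hM0 : (0 : ℤ) < 2 ^ (2 * t + 1) := by positivity
  set M : ℤ := 2 ^ (2 * t + 1) with hMdef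
  have h1 : (2 : ℤ) ^ (2 * t + 2) = 2 * M := by rw [pow_succ]; ring
  have h2 : (2 : ℤ) ^ (2 * t + 3) = 4 * M := by
    rw [show 2 * t + 3 = (2 * t + 1) + 2 by ring, pow_add, hMdef]; ring
  rw [S_split, S_low]
  interval_cases a
  · have e0 : (0 : ℤ) * M + r = r := by ring
    rw [e0, f_min _ _ (show 1 ≤ 2 * t + 2 by omega), f_min _ _ (show 1 ≤ 2 * t + 3 by omega),
      h1, h2, Int.emod_eq_of_lt hr0 (by omega), Int.emod_eq_of_lt hr0 (by omega)]
    rw [min_eq_left (by omega), min_eq_left (by omega)]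
    norm_num; ring
  · have e0 : (1 : ℤ) * M + r = M + r := by ring
    rw [e0, f_min _ _ (show 1 ≤ 2 * t + 2 by omega), f_min _ _ (show 1 ≤ 2 * t + 3 by omega),
      h1, h2, Int.emod_eq_of_lt (by omega) (by omega), Int.emod_eq_of_lt (by omega) (by omega)]
    rw [min_eq_right (by omega), min_eq_left (by omega)]
    norm_num; ring
  · have e0 : (2 : ℤ) * M + r = r + 2 * M * 1 := by ring
    rw [e0, f_min _ _ (show 1 ≤ 2 * t + 2 by omega), f_min _ _ (show 1 ≤ 2 * t + 3 by omega),
      h1, h2, Int.add_mul_emod_self_left, Int.emod_eq_of_lt hr0 (by omega),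
      Int.emod_eq_of_lt (by omega) (by omega)]
    rw [min_eq_left (by omega), min_eq_right (by omega)]
    norm_num; ring
  · have e0 : (3 : ℤ) * M + r = (M + r) + 2 * M * 1 := by ring
    rw [e0, f_min _ _ (show 1 ≤ 2 * t + 2 by omega), f_min _ _ (show 1 ≤ 2 * t + 3 by omega),
      h1, h2, Int.add_mul_emod_self_left, Int.emod_eq_of_lt (by omega) (by omega),
      Int.emod_eq_of_lt (by omega) (by omega)]
    rw [min_eq_right (by omega), min_eq_right (by omega)]
    norm_num; ring

lemma pow4 (t : ℕ) : ∃ u : ℤ, 0 ≤ u ∧ (4 : ℤ) ^ t = 3 * u + 1 := by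
  induction t with
  | zero => exact ⟨0, by norm_num⟩
  | succ t ih =>
    obtain ⟨u, hu0, hu⟩ := ih
    exact ⟨4 * u + 1, by omega, by rw [pow_succ, hu]; ring⟩

lemma m_odd (t : ℕ) (u : ℤ) (hu : (4 : ℤ) ^ t = 3 * u + 1) : m (2 * t + 1) = 4 * u + 1 := by
  unfold m
  have h1 : ((-1 : ℤ)) ^ (2 * t + 1) = -1 := Odd.neg_one_pow ⟨t, by ring⟩
  have h2 : (2 : ℤ) ^ (2 * t + 1) = 2 * (3 * u + 1) := by
    rw [← hu, pow_succ, pow_mul]; norm_num; ring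
  rw [h1, h2]
  have : 4 * (2 * (3 * u + 1)) - (-1) - 3 = 6 * (4 * u + 1) := by ring
  rw [this, Int.mul_ediv_cancel_left _ (by norm_num : (6 : ℤ) ≠ 0)]

lemma key (t : ℕ) :
    (∀ i : ℤ, 0 ≤ i → i < 2 ^ (2 * t + 1) → S i (2 * t + 1) ≤ m (2 * t + 1)) ∧
      ((Finset.Ioo (0 : ℤ) (2 ^ (2 * t + 1))).filter
          (fun i => S i (2 * t + 1) = m (2 * t + 1))).card = 2 ^ t := by
  induction t with
  | zero =>
    have hm : m 1 = 1 := by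
      have := m_odd 0 0 (by norm_num)
      simpa using this
    have hS1 : ∀ i : ℤ, S i 1 = min (i % 2) (2 - i % 2) := by
      intro i
      have : S i 1 = f i 1 := by unfold S; simp
      rw [this, f_min _ _ le_rfl]; norm_num
    constructor
    · intro i h0 h2
      simp only [Nat.mul_zero, Nat.zero_add, pow_one] at h2 ⊢
      rw [hS1, hm]
      have h3 := Int.emod_nonneg i (by norm_num : (2 : ℤ) ≠ 0)
      have h4 := Int.emod_lt_of_pos i (by norm_num : (0 : ℤ) < 2)
      rw [min_def]; split <;> omega
    · have hIoo : Finset.Ioo (0 : ℤ) (2 ^ (2 * 0 + 1)) = {1} := by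
        ext x; simp only [Finset.mem_Ioo, Finset.mem_singleton]; omega
      rw [hIoo, Finset.filter_singleton, if_pos]
      · simp
      · simp only [Nat.mul_zero, Nat.zero_add]
        rw [hS1, hm]; norm_num
  | succ t ih =>
    obtain ⟨ihb, ihc⟩ := ih
    obtain ⟨u, hu0, hu⟩ := pow4 t
    have hm1 : m (2 * t + 1) = 4 * u + 1 := m_odd t u hu
    have hm3 : m (2 * t + 3) = 16 * u + 5 := by
      have h4 : (4 : ℤ) ^ (t + 1) = 3 * (4 * u + 1) + 1 := by rw [pow_succ, hu]; ring
      have := m_odd (t + 1) (4 * u + 1) h4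
      rw [show 2 * (t + 1) + 1 = 2 * t + 3 by ring] at this
      rw [this]; ring
    have hM0 : (0 : ℤ) < 2 ^ (2 * t + 1) := by positivity
    set M : ℤ := 2 ^ (2 * t + 1) with hMdef
    have hMu : 2 * M = 12 * u + 4 := by
      have h2M : (2 : ℤ) * M = 4 ^ (t + 1) := by
        rw [hMdef, show (4 : ℤ) ^ (t + 1) = 2 ^ (2 * (t + 1)) by rw [pow_mul]; norm_num,
          show 2 * (t + 1) = (2 * t + 1) + 1 by ring, pow_succ]
        ring
      rw [h2M, pow_succ, hu]; ring
    have h4M : (2 : ℤ) ^ (2 * (t + 1) + 1) = 4 * M := by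
      rw [show 2 * (t + 1) + 1 = (2 * t + 1) + 2 by ring, pow_add, hMdef]; ring
    have decomp : ∀ i : ℤ, 0 ≤ i → i < 4 * M →
        ∃ a r, 0 ≤ a ∧ a < 4 ∧ 0 ≤ r ∧ r < M ∧ i = a * M + r := by
      intro i h0 h4
      refine ⟨i / M, i % M, Int.ediv_nonneg h0 (le_of_lt hM0), ?_,
        Int.emod_nonneg _ (ne_of_gt hM0), Int.emod_lt_of_pos _ hM0, ?_⟩
      · rw [Int.ediv_lt_iff_lt_mul hM0]; linarith
      · have := Int.mul_ediv_add_emod i M; linarith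
    have hidx : 2 * (t + 1) + 1 = 2 * t + 3 := by ring
    have bound : ∀ i : ℤ, 0 ≤ i → i < 2 ^ (2 * (t + 1) + 1) →
        S i (2 * (t + 1) + 1) ≤ m (2 * (t + 1) + 1) := by
      intro i h0 hlt
      rw [h4M] at hlt
      obtain ⟨a, r, ha0, ha4, hr0, hrM, rfl⟩ := decomp i h0 hlt
      rw [hidx, S_rec t a r ha0 ha4 hr0 hrM, hm3]
      have hb := ihb r hr0 hrM
      rw [hm1] at hb
      split_ifs <;> omega
    refine ⟨bound, ?_⟩
    set A := (Finset.Ioo (0 : ℤ) (2 ^ (2 * t + 1))).filter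
      (fun i => S i (2 * t + 1) = m (2 * t + 1)) with hA
    have himg : (Finset.Ioo (0 : ℤ) (2 ^ (2 * (t + 1) + 1))).filter
          (fun i => S i (2 * (t + 1) + 1) = m (2 * (t + 1) + 1)) =
        A.image (fun r => M + r) ∪ A.image (fun r => 2 * M + r) := by
      ext i
      simp only [Finset.mem_union, Finset.mem_image, Finset.mem_filter, Finset.mem_Ioo, hA]
      constructor
      · rintro ⟨⟨hi0, hi4⟩, hSi⟩
        rw [h4M] at hi4
        obtain ⟨a, r, ha0, ha4, hr0, hrM, rfl⟩ := decomp i (le_of_lt hi0) hi4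
        have hb := ihb r hr0 hrM
        rw [hm1] at hb
        rw [hidx, S_rec t a r ha0 ha4 hr0 hrM, hm3] at hSi
        interval_cases a
        · exfalso
          rw [if_pos rfl] at hSi
          omega
        · left
          rw [if_neg (by norm_num), if_neg (by norm_num)] at hSi
          have hrpos : 0 < r := by
            rcases eq_or_lt_of_le hr0 with h | h
            · exfalso; rw [← h, S_zero] at hSi; omega
            · exact h
          exact ⟨r, ⟨⟨hrpos, hrM⟩, by rw [hm1]; omega⟩, by ring⟩
        · right
          rw [if_neg (by norm_num), if_neg (by norm_num)] at hSi
          have hrpos : 0 < r := by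
            rcases eq_or_lt_of_le hr0 with h | h
            · exfalso; rw [← h, S_zero] at hSi; omega
            · exact h
          exact ⟨r, ⟨⟨hrpos, hrM⟩, by rw [hm1]; omega⟩, by ring⟩
        · exfalso
          rw [if_neg (by norm_num), if_pos rfl] at hSi
          have hr' : r = 0 := by omega
          rw [hr', S_zero] at hSi
          omega
      · rintro (⟨r, ⟨⟨hr0, hrM⟩, hSr⟩, rfl⟩ | ⟨r, ⟨⟨hr0, hrM⟩, hSr⟩, rfl⟩)
        · have hrec := S_rec t 1 r (by norm_num) (by norm_num) (le_of_lt hr0) hrM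
          refine ⟨⟨by omega, by rw [h4M]; omega⟩, ?_⟩
          rw [hidx, show M + r = 1 * M + r by ring, hrec, hm3,
            if_neg (by norm_num), if_neg (by norm_num), hSr, hm1]
          omega
        · have hrec := S_rec t 2 r (by norm_num) (by norm_num) (le_of_lt hr0) hrM
          refine ⟨⟨by omega, by rw [h4M]; omega⟩, ?_⟩
          rw [hidx, hrec, hm3, if_neg (by norm_num), if_neg (by norm_num), hSr, hm1]
          omega
    have hdisj : Disjoint (A.image (fun r => M + r)) (A.image (fun r => 2 * M + r)) := by
      rw [Finset.disjoint_left]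
      rintro x hx1 hx2
      simp only [Finset.mem_image, Finset.mem_filter, Finset.mem_Ioo, hA] at hx1 hx2
      obtain ⟨r1, ⟨⟨h1, h2⟩, _⟩, e1⟩ := hx1
      obtain ⟨r2, ⟨⟨h3, h4⟩, _⟩, e2⟩ := hx2
      omega
    rw [himg, Finset.card_union_of_disjoint hdisj,
      Finset.card_image_of_injective _ (add_right_injective M),
      Finset.card_image_of_injective _ (add_right_injective (2 * M)), ihc]
    ring

theorem card_maximizers_odd (n : ℕ) (hn : 1 ≤ n) (hno : Odd n) :
    ((Finset.Ioo (0 : ℤ) (2 ^ n)).filter (fun i => S i n = m n)).card =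
      2 ^ ((n - 1) / 2) := by
  obtain ⟨t, rfl⟩ := hno
  have ht : (2 * t + 1 - 1) / 2 = t := by omega
  rw [ht]
  exact (key t).2
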